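/- Suppose ∫ π_β (|ℓ| + |log q₀|) dμ < ∞ for all β ∈ [0,1] and L is twice continuously differentiable on [0,1] with L′(η) = ∫ π_η ℓ dμ for all η. Then for all 0 ≤ β < β′ ≤ 1 there exists ξ ∈ [β, β′] such that D_KL(π_β ‖ π_{β′}) = (1/2) (β′ − β)² L″(ξ). In particular, each consecutive KL divergence along an equally spaced annealing schedule with β_k = k/K is (1/(2K²)) L″(ξ_k) for some ξ_k ∈ [(k−1)/K, k/K]. -/

import Mathlib

/-!
Where `q₀` and `p` are both positive, `log (π_β / π_β') = (β - β') ℓ + L(β') - L(β)`, so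
`D_KL(π_β ‖ π_β') = L(β') - L(β) - (β' - β) L'(β)` is the first-order Taylor remainder of `L`,
which takes Lagrange form by Cauchy's mean value theorem. The pointwise identity needs `p > 0`
a.e. on `{q₀ > 0}`: by dominated convergence `Z_η → ∫_{p ≠ 0} q₀` as `η → 0⁺`, and continuity
of `Z` at `0` makes this limit equal to `Z_0 = ∫ q₀`.
-/

open MeasureTheory Real Filter

noncomputable section

variable {X : Type*} [MeasurableSpace X]

/-- Geometric annealing path `γ_η = q₀^{1-η} p^η`, set to `0` where `q₀` vanishes. -/
def gammaPath (q0 p : X → ℝ) (η : ℝ) (z : X) : ℝ :=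
  if q0 z = 0 then 0 else q0 z ^ (1 - η) * p z ^ η

/-- Normalization constant `Z_η = ∫ γ_η dμ` along the annealing path. -/
def Zpath (μ : Measure X) (q0 p : X → ℝ) (η : ℝ) : ℝ :=
  ∫ z, gammaPath q0 p η z ∂μ

/-- Normalized annealing density `π_η = γ_η / Z_η`. -/
def piPath (μ : Measure X) (q0 p : X → ℝ) (η : ℝ) (z : X) : ℝ :=
  gammaPath q0 p η z / Zpath μ q0 p η

/-- Kullback–Leibler divergence `D_KL(a‖b) = ∫ a log(a/b) dμ` between densities. -/
def KLdiv (μ : Measure X) (a b : X → ℝ) : ℝ :=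
  ∫ z, a z * Real.log (a z / b z) ∂μ


/-- `ℓ = log(p/q₀)`. -/
def ell (q0 p : X → ℝ) (z : X) : ℝ := Real.log (p z / q0 z)

open Set Topology

set_option linter.unusedSectionVars false

theorem taylor_mean_remainder_lagrange_of_hasDerivWithinAt {f f' f'' : ℝ → ℝ} {a b : ℝ}
    (hab : a < b)
    (hf : ∀ x ∈ Icc a b, HasDerivWithinAt f (f' x) (Icc a b) x)
    (hf' : ∀ x ∈ Icc a b, HasDerivWithinAt f' (f'' x) (Icc a b) x) :
    ∃ ξ ∈ Ioo a b, f b - f a - (b - a) * f' a = 1 / 2 * (b - a) ^ 2 * f'' ξ := by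
  have hderiv {g g' : ℝ → ℝ} (hg : ∀ x ∈ Icc a b, HasDerivWithinAt g (g' x) (Icc a b) x)
      (x : ℝ) (hx : x ∈ Ioo a b) : HasDerivAt g (g' x) x :=
    (hg x (Ioo_subset_Icc_self hx)).hasDerivAt (Icc_mem_nhds hx.1 hx.2)
  have hcont {g g' : ℝ → ℝ} (hg : ∀ x ∈ Icc a b, HasDerivWithinAt g (g' x) (Icc a b) x) :
      ContinuousOn g (Icc a b) := fun x hx => (hg x hx).continuousWithinAt
  -- Cauchy's mean value theorem for the remainder `F t = f b - f t - (b - t) f' t` against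
  -- `G t = (b - t)²`, both of which vanish at `b`.
  obtain ⟨c, hc, hkey⟩ := exists_ratio_hasDerivAt_eq_ratio_slope
    (fun t => f b - f t - (b - t) * f' t) (fun x => -((b - x) * f'' x)) hab
    ((continuousOn_const.sub (hcont hf)).sub
      ((continuousOn_const.sub continuousOn_id).mul (hcont hf')))
    (fun x hx => (((hderiv hf x hx).const_sub (f b)).sub
      (((hasDerivAt_id' x).const_sub b).mul (hderiv hf' x hx))).congr_deriv (by ring))
    (fun t => (b - t) ^ 2) (fun x => -2 * (b - x)) (by fun_prop)
    (fun x _ => (((hasDerivAt_id' x).const_sub b).pow 2).congr_deriv (by ring))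
  refine ⟨c, hc, mul_right_cancel₀ (sub_pos.2 hc.2).ne' ?_⟩
  linear_combination (-1 / 2 : ℝ) * hkey

section AnnealingPath

variable {q0 p : X → ℝ}

theorem gammaPath_of_eq_zero {z : X} (h : q0 z = 0) (η : ℝ) : gammaPath q0 p η z = 0 :=
  if_pos h

theorem gammaPath_of_ne_zero {z : X} (h : q0 z ≠ 0) (η : ℝ) :
    gammaPath q0 p η z = q0 z ^ (1 - η) * p z ^ η :=
  if_neg h

theorem gammaPath_zero : gammaPath q0 p 0 = q0 := by
  funext z
  by_cases h : q0 z = 0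
  · rw [gammaPath_of_eq_zero h, h]
  · simp [gammaPath_of_ne_zero h]

theorem gammaPath_nonneg (hq0 : ∀ z, 0 ≤ q0 z) (hp : ∀ z, 0 ≤ p z) (η : ℝ) (z : X) :
    0 ≤ gammaPath q0 p η z := by
  by_cases h : q0 z = 0
  · rw [gammaPath_of_eq_zero h]
  · rw [gammaPath_of_ne_zero h]
    exact mul_nonneg (rpow_nonneg (hq0 z) _) (rpow_nonneg (hp z) _)

theorem measurable_gammaPath (hq0m : Measurable q0) (hpm : Measurable p) (η : ℝ) :
    Measurable (gammaPath q0 p η) :=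
  Measurable.ite (hq0m (measurableSet_singleton 0)) measurable_const
    ((hq0m.pow_const _).mul (hpm.pow_const _))

theorem gammaPath_le_add (hq0 : ∀ z, 0 ≤ q0 z) (hp : ∀ z, 0 ≤ p z) {η : ℝ} (hη : η ∈ Icc 0 1)
    (z : X) : gammaPath q0 p η z ≤ q0 z + gammaPath q0 p 1 z := by
  by_cases h : q0 z = 0
  · simpa [gammaPath_of_eq_zero h] using hq0 z
  · rw [gammaPath_of_ne_zero h, gammaPath_of_ne_zero h]
    calc q0 z ^ (1 - η) * p z ^ η ≤ (1 - η) * q0 z + η * p z :=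
          geom_mean_le_arith_mean2_weighted (by linarith [hη.2]) hη.1 (hq0 z) (hp z) (by ring)
      _ ≤ q0 z + q0 z ^ (1 - 1 : ℝ) * p z ^ (1 : ℝ) := by
          simp only [sub_self, rpow_zero, rpow_one, one_mul]
          nlinarith [hq0 z, hp z, hη.1, hη.2]

theorem tendsto_gammaPath_nhdsWithin_zero (z : X) :
    Tendsto (fun η => gammaPath q0 p η z) (𝓝[Ioc 0 1] 0)
      (𝓝 ({z | p z = 0}ᶜ.indicator q0 z)) := by
  by_cases hq : q0 z = 0
  · simp [gammaPath_of_eq_zero hq, indicator_apply, hq]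
  by_cases hp : p z = 0
  · rw [indicator_of_notMem (by simpa using hp)]
    refine tendsto_const_nhds.congr'
      (eventually_nhdsWithin_of_forall fun η hη => (?_ : gammaPath q0 p η z = 0).symm)
    rw [gammaPath_of_ne_zero hq, hp, zero_rpow hη.1.ne', mul_zero]
  · rw [indicator_of_mem (by simpa using hp)]
    have hc : ContinuousAt (fun η : ℝ => q0 z ^ (1 - η) * p z ^ η) 0 :=
      ((continuousAt_const_rpow hq).comp (continuousAt_const.sub continuousAt_id)).mul
        (continuousAt_const_rpow hp)
    simpa [gammaPath_of_ne_zero hq] using hc.tendsto.mono_left nhdsWithin_le_nhds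

theorem ae_ne_zero_imp_ne_zero_of_continuousWithinAt_Zpath {μ : Measure X}
    (hq0m : Measurable q0) (hpm : Measurable p) (hq0 : ∀ z, 0 ≤ q0 z) (hp : ∀ z, 0 ≤ p z)
    (h0 : Integrable (gammaPath q0 p 0) μ) (h1 : Integrable (gammaPath q0 p 1) μ)
    (hZ : ContinuousWithinAt (Zpath μ q0 p) (Ioc 0 1) 0) :
    ∀ᵐ z ∂μ, q0 z ≠ 0 → p z ≠ 0 := by
  set s := {z | p z = 0}
  have hs : MeasurableSet s := hpm (measurableSet_singleton 0)
  rw [gammaPath_zero] at h0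
  have hlim : Tendsto (Zpath μ q0 p) (𝓝[Ioc 0 1] 0) (𝓝 (∫ z in sᶜ, q0 z ∂μ)) := by
    rw [← integral_indicator hs.compl]
    refine tendsto_integral_filter_of_dominated_convergence (fun z => q0 z + gammaPath q0 p 1 z)
      (Eventually.of_forall fun η => (measurable_gammaPath hq0m hpm η).aestronglyMeasurable)
      (eventually_nhdsWithin_of_forall fun η hη => ae_of_all _ fun z => ?_) (h0.add h1)
      (ae_of_all _ tendsto_gammaPath_nhdsWithin_zero)
    rw [norm_of_nonneg (gammaPath_nonneg hq0 hp η z)]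
    exact gammaPath_le_add hq0 hp (Ioc_subset_Icc_self hη) z
  have := left_nhdsWithin_Ioc_neBot (zero_lt_one' ℝ)
  have hZ0 : Zpath μ q0 p 0 = ∫ z, q0 z ∂μ := by rw [Zpath, gammaPath_zero]
  have hmass : ∫ z in s, q0 z ∂μ = 0 := by
    have := integral_add_compl hs h0
    rw [← hZ0, tendsto_nhds_unique hZ.tendsto hlim] at this
    linarith
  have hq0s := (setIntegral_eq_zero_iff_of_nonneg_ae (ae_of_all _ hq0) h0.integrableOn).1 hmass
  rw [EventuallyEq, ae_restrict_iff' hs] at hq0s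
  filter_upwards [hq0s] with z hz hq0z hpz using hq0z (hz hpz)

end AnnealingPath

section KLIdentity

variable {μ : Measure X} {q0 p : X → ℝ} {z : X}

theorem piPath_pos {η : ℝ} (hq : 0 < q0 z) (hp : 0 < p z) (hZ : 0 < Zpath μ q0 p η) :
    0 < piPath μ q0 p η z := by
  rw [piPath, gammaPath_of_ne_zero hq.ne']
  positivity

theorem log_piPath {η : ℝ} (hq : 0 < q0 z) (hp : 0 < p z) (hZ : 0 < Zpath μ q0 p η) :
    log (piPath μ q0 p η z) = log (q0 z) + η * ell q0 p z - log (Zpath μ q0 p η) := by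
  rw [piPath, gammaPath_of_ne_zero hq.ne', log_div (by positivity) hZ.ne',
    log_mul (by positivity) (by positivity), log_rpow hq, log_rpow hp, ell,
    log_div hp.ne' hq.ne']
  ring

theorem integrable_piPath {η : ℝ} (h : Integrable (gammaPath q0 p η) μ) :
    Integrable (piPath μ q0 p η) μ :=
  h.div_const _

theorem integral_piPath {η : ℝ} (hZ : Zpath μ q0 p η ≠ 0) : ∫ z, piPath μ q0 p η z ∂μ = 1 := by
  unfold piPath
  rw [integral_div]
  exact div_self hZ

theorem piPath_mul_log_div_piPath {β β' : ℝ} (hq : 0 ≤ q0 z) (hp : 0 ≤ p z)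
    (hsupp : q0 z ≠ 0 → p z ≠ 0) (hZ : 0 < Zpath μ q0 p β) (hZ' : 0 < Zpath μ q0 p β') :
    piPath μ q0 p β z * log (piPath μ q0 p β z / piPath μ q0 p β' z)
      = (β - β') * (piPath μ q0 p β z * ell q0 p z)
        + (log (Zpath μ q0 p β') - log (Zpath μ q0 p β)) * piPath μ q0 p β z := by
  rcases hq.eq_or_lt with hq | hq
  · simp [piPath, gammaPath_of_eq_zero hq.symm]
  have hp : 0 < p z := hp.lt_of_ne (hsupp hq.ne').symm
  rw [log_div (piPath_pos hq hp hZ).ne' (piPath_pos hq hp hZ').ne', log_piPath hq hp hZ,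
    log_piPath hq hp hZ']
  ring

theorem KLdiv_piPath_eq {β β' : ℝ} (hq0 : ∀ z, 0 ≤ q0 z) (hp : ∀ z, 0 ≤ p z)
    (hsupp : ∀ᵐ z ∂μ, q0 z ≠ 0 → p z ≠ 0) (hγ : Integrable (gammaPath q0 p β) μ)
    (hZ : 0 < Zpath μ q0 p β) (hZ' : 0 < Zpath μ q0 p β')
    (hℓ : Integrable (fun z => piPath μ q0 p β z * ell q0 p z) μ) :
    KLdiv μ (piPath μ q0 p β) (piPath μ q0 p β')
      = (β - β') * ∫ z, piPath μ q0 p β z * ell q0 p z ∂μ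
        + (log (Zpath μ q0 p β') - log (Zpath μ q0 p β)) := by
  rw [KLdiv, integral_congr_ae (hsupp.mono fun z hz =>
      piPath_mul_log_div_piPath (hq0 z) (hp z) hz hZ hZ'),
    integral_add (hℓ.const_mul _) ((integrable_piPath hγ).const_mul _), integral_const_mul,
    integral_const_mul, integral_piPath hZ.ne', mul_one]

theorem integrable_piPath_mul_ell {g : X → ℝ} {η : ℝ}
    (hq0m : Measurable q0) (hpm : Measurable p) (hq0 : ∀ z, 0 ≤ q0 z) (hp : ∀ z, 0 ≤ p z)
    (hg : ∀ z, 0 ≤ g z) (hZ : 0 ≤ Zpath μ q0 p η)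
    (h : Integrable (fun z => piPath μ q0 p η z * (|ell q0 p z| + g z)) μ) :
    Integrable (fun z => piPath μ q0 p η z * ell q0 p z) μ := by
  refine h.mono' (((measurable_gammaPath hq0m hpm η).div_const _).mul
    (hpm.div hq0m).log).aestronglyMeasurable (ae_of_all _ fun z => ?_)
  have hπ : 0 ≤ piPath μ q0 p η z := div_nonneg (gammaPath_nonneg hq0 hp η z) hZ
  rw [norm_mul, norm_of_nonneg hπ, norm_eq_abs]
  exact mul_le_mul_of_nonneg_left (le_add_of_nonneg_right (hg z)) hπ

theorem exists_KLdiv_piPath_eq_lagrange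
    (hq0 : ∀ z, 0 ≤ q0 z) (hp : ∀ z, 0 ≤ p z) (hsupp : ∀ᵐ z ∂μ, q0 z ≠ 0 → p z ≠ 0)
    (hZ : ∀ η ∈ Icc (0 : ℝ) 1, Integrable (gammaPath q0 p η) μ ∧ 0 < Zpath μ q0 p η)
    {L'' : ℝ → ℝ}
    (hL' : ∀ η ∈ Icc (0 : ℝ) 1, HasDerivWithinAt (fun t => log (Zpath μ q0 p t))
      (∫ z, piPath μ q0 p η z * ell q0 p z ∂μ) (Icc 0 1) η)
    (hL'' : ∀ η ∈ Icc (0 : ℝ) 1, HasDerivWithinAt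
      (fun t => ∫ z, piPath μ q0 p t z * ell q0 p z ∂μ) (L'' η) (Icc 0 1) η)
    {β β' : ℝ} (h0 : 0 ≤ β) (hlt : β < β') (h1 : β' ≤ 1)
    (hℓ : Integrable (fun z => piPath μ q0 p β z * ell q0 p z) μ) :
    ∃ ξ ∈ Icc β β',
      KLdiv μ (piPath μ q0 p β) (piPath μ q0 p β') = 1 / 2 * (β' - β) ^ 2 * L'' ξ := by
  have hsub : Icc β β' ⊆ Icc 0 1 := Icc_subset_Icc h0 h1
  have hβ : β ∈ Icc (0 : ℝ) 1 := hsub (left_mem_Icc.2 hlt.le)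
  have hβ' : β' ∈ Icc (0 : ℝ) 1 := hsub (right_mem_Icc.2 hlt.le)
  obtain ⟨ξ, hξ, htaylor⟩ := taylor_mean_remainder_lagrange_of_hasDerivWithinAt hlt
    (fun x hx => (hL' x (hsub hx)).mono hsub) (fun x hx => (hL'' x (hsub hx)).mono hsub)
  refine ⟨ξ, Ioo_subset_Icc_self hξ, ?_⟩
  rw [KLdiv_piPath_eq hq0 hp hsupp (hZ β hβ).1 (hZ β hβ).2 (hZ β' hβ').2 hℓ]
  linear_combination htaylor

end KLIdentity

theorem consecutive_kl_lagrange_form_general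
    (μ : Measure X) (q0 p : X → ℝ)
    (hq0m : Measurable q0) (hq0nn : ∀ z, 0 ≤ q0 z)
    (hpm : Measurable p) (hpnn : ∀ z, 0 ≤ p z)
    (hZ : ∀ η ∈ Set.Icc (0 : ℝ) 1,
      Integrable (gammaPath q0 p η) μ ∧ 0 < Zpath μ q0 p η)
    (hπint : ∀ β ∈ Set.Icc (0 : ℝ) 1,
      Integrable (fun z => piPath μ q0 p β z * (|ell q0 p z| + |Real.log (q0 z)|)) μ)
    (L'' : ℝ → ℝ)
    (hL' : ∀ η ∈ Set.Icc (0 : ℝ) 1,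
      HasDerivWithinAt (fun t => Real.log (Zpath μ q0 p t))
        (∫ z, piPath μ q0 p η z * ell q0 p z ∂μ) (Set.Icc 0 1) η)
    (hL'' : ∀ η ∈ Set.Icc (0 : ℝ) 1,
      HasDerivWithinAt (fun t => ∫ z, piPath μ q0 p t z * ell q0 p z ∂μ)
        (L'' η) (Set.Icc 0 1) η) :
    (∀ β β' : ℝ, 0 ≤ β → β < β' → β' ≤ 1 →
      ∃ ξ ∈ Set.Icc β β',
        KLdiv μ (piPath μ q0 p β) (piPath μ q0 p β')
          = 1 / 2 * (β' - β) ^ 2 * L'' ξ) ∧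
    (∀ K : ℕ, 1 ≤ K → ∀ k ∈ Finset.Icc 1 K,
      ∃ ξ ∈ Set.Icc (((k : ℝ) - 1) / K) ((k : ℝ) / K),
        KLdiv μ (piPath μ q0 p (((k : ℝ) - 1) / K)) (piPath μ q0 p ((k : ℝ) / K))
          = 1 / (2 * (K : ℝ) ^ 2) * L'' ξ) := by
  have h0 : (0 : ℝ) ∈ Icc (0 : ℝ) 1 := left_mem_Icc.2 zero_le_one
  have hZcont : ContinuousWithinAt (Zpath μ q0 p) (Ioc 0 1) 0 :=
    ((hL' 0 h0).continuousWithinAt.rexp.congr (fun η hη => (exp_log (hZ η hη).2).symm)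
      (exp_log (hZ 0 h0).2).symm).mono Ioc_subset_Icc_self
  have hsupp := ae_ne_zero_imp_ne_zero_of_continuousWithinAt_Zpath hq0m hpm hq0nn hpnn
    (hZ 0 h0).1 (hZ 1 (right_mem_Icc.2 zero_le_one)).1 hZcont
  have hKL : ∀ β β' : ℝ, 0 ≤ β → β < β' → β' ≤ 1 → ∃ ξ ∈ Icc β β',
      KLdiv μ (piPath μ q0 p β) (piPath μ q0 p β') = 1 / 2 * (β' - β) ^ 2 * L'' ξ :=
    fun β β' hβ hlt hβ' =>
      have hβ01 : β ∈ Icc (0 : ℝ) 1 := ⟨hβ, by linarith⟩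
      exists_KLdiv_piPath_eq_lagrange hq0nn hpnn hsupp hZ hL' hL'' hβ hlt hβ'
        (integrable_piPath_mul_ell hq0m hpm hq0nn hpnn (fun z => abs_nonneg _)
          (hZ β hβ01).2.le (hπint β hβ01))
  refine ⟨hKL, fun K hK k hk => ?_⟩
  obtain ⟨hk1, hkK⟩ := Finset.mem_Icc.1 hk
  have hKpos : (0 : ℝ) < K := by exact_mod_cast hK
  have hk1' : (1 : ℝ) ≤ k := by exact_mod_cast hk1
  have hkK' : (k : ℝ) ≤ K := by exact_mod_cast hkK
  obtain ⟨ξ, hξ, hξeq⟩ := hKL (((k : ℝ) - 1) / K) ((k : ℝ) / K)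
    (div_nonneg (by linarith) hKpos.le) (div_lt_div_of_pos_right (by linarith) hKpos)
    ((div_le_one hKpos).2 hkK')
  refine ⟨ξ, hξ, ?_⟩
  rw [hξeq]
  field_simp
  ring

/-- Under integrability and `C²` regularity of `L = log Z`, each KL divergence
between two annealing distributions is a Lagrange remainder: for `0 ≤ β < β′ ≤ 1` there is
`ξ ∈ [β, β′]` with `D_KL(π_β ‖ π_{β′}) = (1/2)(β′ − β)² L″(ξ)`. -/
theorem consecutive_kl_lagrange_form
    (μ : Measure X) [SigmaFinite μ] (q0 p : X → ℝ)
    (hq0m : Measurable q0) (hq0nn : ∀ z, 0 ≤ q0 z) (hq0one : ∫ z, q0 z ∂μ = 1)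
    (hpm : Measurable p) (hpnn : ∀ z, 0 ≤ p z) (hpone : ∫ z, p z ∂μ = 1)
    (hsupp : ∀ᵐ z ∂μ, 0 < p z → 0 < q0 z)
    (hZ : ∀ η ∈ Set.Icc (0 : ℝ) 1,
      Integrable (gammaPath q0 p η) μ ∧ 0 < Zpath μ q0 p η)
    (hπint : ∀ β ∈ Set.Icc (0 : ℝ) 1,
      Integrable (fun z => piPath μ q0 p β z * (|ell q0 p z| + |Real.log (q0 z)|)) μ)
    (L'' : ℝ → ℝ)
    (hL' : ∀ η ∈ Set.Icc (0 : ℝ) 1,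
      HasDerivWithinAt (fun t => Real.log (Zpath μ q0 p t))
        (∫ z, piPath μ q0 p η z * ell q0 p z ∂μ) (Set.Icc 0 1) η)
    (hL'' : ∀ η ∈ Set.Icc (0 : ℝ) 1,
      HasDerivWithinAt (fun t => ∫ z, piPath μ q0 p t z * ell q0 p z ∂μ)
        (L'' η) (Set.Icc 0 1) η)
    (hL''cont : ContinuousOn L'' (Set.Icc 0 1)) :
    (∀ β β' : ℝ, 0 ≤ β → β < β' → β' ≤ 1 →
      ∃ ξ ∈ Set.Icc β β',
        KLdiv μ (piPath μ q0 p β) (piPath μ q0 p β')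
          = 1 / 2 * (β' - β) ^ 2 * L'' ξ) ∧
    (∀ K : ℕ, 1 ≤ K → ∀ k ∈ Finset.Icc 1 K,
      ∃ ξ ∈ Set.Icc (((k : ℝ) - 1) / K) ((k : ℝ) / K),
        KLdiv μ (piPath μ q0 p (((k : ℝ) - 1) / K)) (piPath μ q0 p ((k : ℝ) / K))
          = 1 / (2 * (K : ℝ) ^ 2) * L'' ξ) :=
  consecutive_kl_lagrange_form_general μ q0 p hq0m hq0nn hpm hpnn hZ hπint L'' hL' hL''
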